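/- arXiv:2510.24493 — 3 statements merged into one kernel-verified Lean document; each statement's English description precedes it below -/
import Mathlib

section
/- For every δ > 0 and M > 0 there exists a constant C > 0 such that: whenever the symmetric block matrix R satisfies ‖R‖ ≤ M (operator norm) and Condition (I) holds in the uniform form R₁₁ + δI negative semidefinite and S₁ − δI positive semidefinite, the matrix R is invertible and ‖R⁻¹‖ ≤ C. (This is the paper's claim that Condition (I) implies Assumption (H2): existence and uniform boundedness of R⁻¹.) -/
/-!
Block Gaussian elimination: with `y = x₁ + A⁻¹ B x₂` one has `R (x₁, x₂) = (A y, C y + S x₂)`,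
where `S = D - C A⁻¹ B` is the Schur complement. Condition (I) bounds `A` and `S` below by `δ`
(`δ ‖v‖² ≤ ⟪v, S v⟫ ≤ ‖v‖ ‖S v‖`, and likewise for `-A`), and the off-diagonal blocks have norm at
most `‖R‖ ≤ M`. Solving the triangular system for `y`, then `x₂`, then `x₁` bounds `R` below by
`δ / (1 + (1 + M/δ)²)`, and a square matrix bounded below by `c > 0` is invertible with
`‖R⁻¹‖ ≤ c⁻¹`.
-/

open Matrix WithLp
open scoped Matrix.Norms.L2Operator

namespace Matrix

variable {m n l o : Type*} [Fintype m] [Fintype n] [Fintype l] [Fintype o]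

lemma norm_toLp_sumElim_sq (u : m → ℝ) (v : n → ℝ) :
    ‖toLp 2 (Sum.elim u v)‖ ^ 2 = ‖toLp 2 u‖ ^ 2 + ‖toLp 2 v‖ ^ 2 := by
  simp only [EuclideanSpace.norm_sq_eq, Fintype.sum_sum_type, Sum.elim_inl, Sum.elim_inr]

lemma norm_toLp_le_sumElim_left (u : m → ℝ) (v : n → ℝ) :
    ‖toLp 2 u‖ ≤ ‖toLp 2 (Sum.elim u v)‖ := by
  refine (sq_le_sq₀ (norm_nonneg _) (norm_nonneg _)).mp ?_
  rw [norm_toLp_sumElim_sq]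
  exact le_add_of_nonneg_right (sq_nonneg _)

lemma norm_toLp_le_sumElim_right (u : m → ℝ) (v : n → ℝ) :
    ‖toLp 2 v‖ ≤ ‖toLp 2 (Sum.elim u v)‖ := by
  refine (sq_le_sq₀ (norm_nonneg _) (norm_nonneg _)).mp ?_
  rw [norm_toLp_sumElim_sq]
  exact le_add_of_nonneg_left (sq_nonneg _)

lemma norm_toLp_sumElim_le (u : m → ℝ) (v : n → ℝ) :
    ‖toLp 2 (Sum.elim u v)‖ ≤ ‖toLp 2 u‖ + ‖toLp 2 v‖ := by
  refine (sq_le_sq₀ (norm_nonneg _) (by positivity)).mp ?_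
  rw [norm_toLp_sumElim_sq]
  nlinarith [norm_nonneg (toLp 2 u), norm_nonneg (toLp 2 v)]

lemma norm_toLp_sumElim_zero_left (v : n → ℝ) :
    ‖toLp 2 (Sum.elim (0 : m → ℝ) v)‖ = ‖toLp 2 v‖ := by
  refine (sq_eq_sq₀ (norm_nonneg _) (norm_nonneg _)).mp ?_
  rw [norm_toLp_sumElim_sq, toLp_zero, norm_zero, zero_pow two_ne_zero, zero_add]

lemma norm_toLp_sumElim_zero_right (u : m → ℝ) :
    ‖toLp 2 (Sum.elim u (0 : n → ℝ))‖ = ‖toLp 2 u‖ := by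
  refine (sq_eq_sq₀ (norm_nonneg _) (norm_nonneg _)).mp ?_
  rw [norm_toLp_sumElim_sq, toLp_zero, norm_zero, zero_pow two_ne_zero, add_zero]

lemma norm_toLp_mulVec_le [DecidableEq n] (A : Matrix m n ℝ) (v : n → ℝ) :
    ‖toLp 2 (A *ᵥ v)‖ ≤ ‖A‖ * ‖toLp 2 v‖ := by
  simpa using l2_opNorm_mulVec A (toLp 2 v)

lemma l2_opNorm_le_fromBlocks₁₂ [DecidableEq n] [DecidableEq o] (A : Matrix m n ℝ)
    (B : Matrix m o ℝ) (C : Matrix l n ℝ) (D : Matrix l o ℝ) : ‖B‖ ≤ ‖fromBlocks A B C D‖ := by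
  rw [l2_opNorm_def]
  refine ContinuousLinearMap.opNorm_le_bound _ (norm_nonneg _) fun x => ?_
  calc ‖toLp 2 (B *ᵥ ofLp x)‖
      ≤ ‖toLp 2 (fromBlocks A B C D *ᵥ Sum.elim 0 (ofLp x))‖ := by
        simpa [fromBlocks_mulVec] using norm_toLp_le_sumElim_left (B *ᵥ ofLp x) (D *ᵥ ofLp x)
    _ ≤ ‖fromBlocks A B C D‖ * ‖x‖ := by
        simpa [norm_toLp_sumElim_zero_left] using
          norm_toLp_mulVec_le (fromBlocks A B C D) (Sum.elim 0 (ofLp x))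

lemma l2_opNorm_le_fromBlocks₂₁ [DecidableEq n] [DecidableEq o] (A : Matrix m n ℝ)
    (B : Matrix m o ℝ) (C : Matrix l n ℝ) (D : Matrix l o ℝ) : ‖C‖ ≤ ‖fromBlocks A B C D‖ := by
  rw [l2_opNorm_def]
  refine ContinuousLinearMap.opNorm_le_bound _ (norm_nonneg _) fun x => ?_
  calc ‖toLp 2 (C *ᵥ ofLp x)‖
      ≤ ‖toLp 2 (fromBlocks A B C D *ᵥ Sum.elim (ofLp x) 0)‖ := by
        simpa [fromBlocks_mulVec] using norm_toLp_le_sumElim_right (A *ᵥ ofLp x) (C *ᵥ ofLp x)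
    _ ≤ ‖fromBlocks A B C D‖ * ‖x‖ := by
        simpa [norm_toLp_sumElim_zero_right] using
          norm_toLp_mulVec_le (fromBlocks A B C D) (Sum.elim (ofLp x) 0)

lemma fromBlocks_mulVec_sumElim_eq_schur [DecidableEq n] {A : Matrix n n ℝ} (hA : IsUnit A.det)
    (B : Matrix n m ℝ) (C : Matrix m n ℝ) (D : Matrix m m ℝ) (x₁ : n → ℝ) (x₂ : m → ℝ) :
    fromBlocks A B C D *ᵥ Sum.elim x₁ x₂ =
      Sum.elim (A *ᵥ (x₁ + A⁻¹ *ᵥ (B *ᵥ x₂)))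
        (C *ᵥ (x₁ + A⁻¹ *ᵥ (B *ᵥ x₂)) + (D - C * A⁻¹ * B) *ᵥ x₂) := by
  simp only [fromBlocks_mulVec, Sum.elim_comp_inl, Sum.elim_comp_inr, mulVec_add, mulVec_mulVec,
    sub_mulVec]
  rw [mul_nonsing_inv_cancel_left A B hA, ← Matrix.mul_assoc]
  congr 1
  abel

def BoundedBelowBy (A : Matrix m n ℝ) (c : ℝ) : Prop :=
  ∀ v : n → ℝ, c * ‖toLp 2 v‖ ≤ ‖toLp 2 (A *ᵥ v)‖

@[simp]
lemma boundedBelowBy_neg {A : Matrix m n ℝ} {c : ℝ} :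
    (-A).BoundedBelowBy c ↔ A.BoundedBelowBy c := by
  simp only [BoundedBelowBy, neg_mulVec, toLp_neg, norm_neg]

lemma PosSemidef.boundedBelowBy_of_sub [DecidableEq n] {A : Matrix n n ℝ} {c : ℝ}
    (h : (A - c • 1).PosSemidef) : A.BoundedBelowBy c := by
  intro v
  have hquad : c * ‖toLp 2 v‖ ^ 2 ≤ ‖toLp 2 v‖ * ‖toLp 2 (A *ᵥ v)‖ :=
    calc c * ‖toLp 2 v‖ ^ 2 = c * (v ⬝ᵥ v) := by
          rw [← real_inner_self_eq_norm_sq, EuclideanSpace.inner_eq_star_dotProduct]; simp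
      _ ≤ v ⬝ᵥ (A *ᵥ v) := by
          simpa only [star_trivial, sub_mulVec, smul_mulVec, one_mulVec, dotProduct_sub,
            dotProduct_smul, smul_eq_mul, sub_nonneg] using h.dotProduct_mulVec_nonneg v
      _ = inner ℝ (toLp 2 v) (toLp 2 (A *ᵥ v)) := by
          rw [EuclideanSpace.inner_eq_star_dotProduct]; simp [dotProduct_comm]
      _ ≤ ‖toLp 2 v‖ * ‖toLp 2 (A *ᵥ v)‖ := real_inner_le_norm _ _
  rcases (norm_nonneg (toLp 2 v)).eq_or_lt with hv | hv
  · rw [← hv, mul_zero]; exact norm_nonneg _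
  · nlinarith

lemma BoundedBelowBy.isUnit [DecidableEq n] {A : Matrix n n ℝ} {c : ℝ} (hA : A.BoundedBelowBy c)
    (hc : 0 < c) : IsUnit A := by
  refine mulVec_injective_iff_isUnit.mp fun v w hvw => sub_eq_zero.mp ?_
  have h := hA (v - w)
  rw [mulVec_sub, hvw, sub_self, toLp_zero, norm_zero] at h
  have : ‖toLp 2 (v - w)‖ = 0 := le_antisymm (nonpos_of_mul_nonpos_right h hc) (norm_nonneg _)
  simpa using congrArg ofLp (norm_eq_zero.mp this)

lemma BoundedBelowBy.l2_opNorm_inv_le [DecidableEq n] {A : Matrix n n ℝ} {c : ℝ}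
    (hA : A.BoundedBelowBy c) (hc : 0 < c) : ‖A⁻¹‖ ≤ c⁻¹ := by
  have hdet : IsUnit A.det := (isUnit_iff_isUnit_det A).mp (hA.isUnit hc)
  rw [l2_opNorm_def]
  refine ContinuousLinearMap.opNorm_le_bound _ (inv_nonneg.mpr hc.le) fun x => ?_
  rw [le_inv_mul_iff₀ hc]
  have h := hA (A⁻¹ *ᵥ ofLp x)
  rwa [mulVec_mulVec, mul_nonsing_inv A hdet, one_mulVec, toLp_ofLp] at h

lemma BoundedBelowBy.fromBlocks_of_schur [DecidableEq m] [DecidableEq n] {A : Matrix n n ℝ}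
    {B : Matrix n m ℝ} {C : Matrix m n ℝ} {D : Matrix m m ℝ} {α M : ℝ} (hα : 0 < α)
    (hA : A.BoundedBelowBy α) (hS : (D - C * A⁻¹ * B).BoundedBelowBy α)
    (hB : ‖B‖ ≤ M) (hC : ‖C‖ ≤ M) :
    (fromBlocks A B C D).BoundedBelowBy (α / (1 + (1 + M / α) ^ 2)) := by
  have hdet : IsUnit A.det := (isUnit_iff_isUnit_det A).mp (hA.isUnit hα)
  set κ := M / α
  have hκ : 0 ≤ κ := div_nonneg ((norm_nonneg B).trans hB) hα.le
  have hMκ : M = κ * α := (div_mul_cancel₀ M hα.ne').symm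
  intro x
  obtain ⟨x₁, x₂, rfl⟩ : ∃ x₁ x₂, x = Sum.elim x₁ x₂ := ⟨_, _, (Sum.elim_comp_inl_inr x).symm⟩
  set S := D - C * A⁻¹ * B
  set y := x₁ + A⁻¹ *ᵥ (B *ᵥ x₂)
  set r := ‖toLp 2 (fromBlocks A B C D *ᵥ Sum.elim x₁ x₂)‖
  have hRx : fromBlocks A B C D *ᵥ Sum.elim x₁ x₂ = Sum.elim (A *ᵥ y) (C *ᵥ y + S *ᵥ x₂) :=
    fromBlocks_mulVec_sumElim_eq_schur hdet B C D x₁ x₂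
  obtain ⟨hr₁, hr₂⟩ : ‖toLp 2 (A *ᵥ y)‖ ≤ r ∧ ‖toLp 2 (C *ᵥ y + S *ᵥ x₂)‖ ≤ r := by
    simp only [r, hRx]
    exact ⟨norm_toLp_le_sumElim_left _ _, norm_toLp_le_sumElim_right _ _⟩
  have hy : α * ‖toLp 2 y‖ ≤ r := (hA y).trans hr₁
  have hx₂ : α * ‖toLp 2 x₂‖ ≤ (1 + κ) * r :=
    calc α * ‖toLp 2 x₂‖ ≤ ‖toLp 2 (S *ᵥ x₂)‖ := hS x₂
      _ ≤ ‖toLp 2 (C *ᵥ y + S *ᵥ x₂)‖ + ‖toLp 2 (C *ᵥ y)‖ := by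
          simpa using norm_sub_le (toLp 2 (C *ᵥ y + S *ᵥ x₂)) (toLp 2 (C *ᵥ y))
      _ ≤ r + M * ‖toLp 2 y‖ := add_le_add hr₂
          ((norm_toLp_mulVec_le C y).trans (by gcongr))
      _ ≤ (1 + κ) * r := by
          have := mul_le_mul_of_nonneg_left hy hκ
          rw [hMκ]
          linarith
  have hx₁ : α * ‖toLp 2 x₁‖ ≤ r + κ * (α * ‖toLp 2 x₂‖) :=
    calc α * ‖toLp 2 x₁‖ ≤ α * (‖toLp 2 y‖ + ‖toLp 2 (A⁻¹ *ᵥ (B *ᵥ x₂))‖) := by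
          gcongr
          simpa [y] using norm_sub_le (toLp 2 y) (toLp 2 (A⁻¹ *ᵥ (B *ᵥ x₂)))
      _ ≤ α * (‖toLp 2 y‖ + α⁻¹ * (M * ‖toLp 2 x₂‖)) := by
          gcongr
          exact (norm_toLp_mulVec_le _ _).trans (mul_le_mul (hA.l2_opNorm_inv_le hα)
            ((norm_toLp_mulVec_le B x₂).trans (by gcongr)) (norm_nonneg _) (by positivity))
      _ ≤ r + κ * (α * ‖toLp 2 x₂‖) := by
          rw [hMκ, mul_add, ← mul_assoc α, mul_inv_cancel₀ hα.ne']
          linarith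
  rw [div_mul_eq_mul_div, div_le_iff₀ (by positivity)]
  have hsum := norm_toLp_sumElim_le x₁ x₂
  nlinarith

end Matrix

theorem stmt_0_general (k₁ k₂ : ℕ) (δ M : ℝ) (hδ : 0 < δ) :
    ∃ C : ℝ, 0 < C ∧
      ∀ (R₁₁ : Matrix (Fin k₁) (Fin k₁) ℝ) (R₂₂ : Matrix (Fin k₂) (Fin k₂) ℝ)
        (R₂₁ : Matrix (Fin k₂) (Fin k₁) ℝ),
        R₁₁.IsSymm → R₂₂.IsSymm →
        ∀ (R : Matrix (Fin k₁ ⊕ Fin k₂) (Fin k₁ ⊕ Fin k₂) ℝ),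
          R = Matrix.fromBlocks R₁₁ R₂₁ᵀ R₂₁ R₂₂ →
          ‖R‖ ≤ M →
          (-(R₁₁ + δ • (1 : Matrix (Fin k₁) (Fin k₁) ℝ))).PosSemidef →
          ((R₂₂ - R₂₁ * R₁₁⁻¹ * R₂₁ᵀ) - δ • (1 : Matrix (Fin k₂) (Fin k₂) ℝ)).PosSemidef →
          IsUnit R ∧ ‖R⁻¹‖ ≤ C := by
  refine ⟨(1 + (1 + M / δ) ^ 2) / δ, by positivity, ?_⟩
  rintro R₁₁ R₂₂ R₂₁ - - R rfl hRM h₁₁ hS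
  have h₁₁' : R₁₁.BoundedBelowBy δ := by
    rw [← boundedBelowBy_neg]
    exact PosSemidef.boundedBelowBy_of_sub (by rwa [neg_add'] at h₁₁)
  have hR := h₁₁'.fromBlocks_of_schur hδ hS.boundedBelowBy_of_sub
    ((l2_opNorm_le_fromBlocks₁₂ _ _ _ _).trans hRM)
    ((l2_opNorm_le_fromBlocks₂₁ _ _ _ _).trans hRM)
  have hc : 0 < δ / (1 + (1 + M / δ) ^ 2) := by positivity
  exact ⟨hR.isUnit hc, by simpa only [inv_div] using hR.l2_opNorm_inv_le hc⟩

/-- Condition (I) (in uniform form) implies Assumption (H2): for every `δ > 0` and `M > 0`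
there is a constant `C > 0` such that whenever the symmetric block matrix
`R = [[R₁₁, R₂₁ᵀ],[R₂₁, R₂₂]]` satisfies `‖R‖ ≤ M` (L² operator norm),
`R₁₁ + δ I` is negative semidefinite and `S₁ - δ I` is positive semidefinite
(where `S₁ = R₂₂ - R₂₁ R₁₁⁻¹ R₂₁ᵀ` is the Schur complement), the matrix `R` is
invertible and `‖R⁻¹‖ ≤ C`. -/
theorem stmt_0 (k₁ k₂ : ℕ) (hk₁ : 0 < k₁) (hk₂ : 0 < k₂) (δ M : ℝ) (hδ : 0 < δ) (hM : 0 < M) :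
    ∃ C : ℝ, 0 < C ∧
      ∀ (R₁₁ : Matrix (Fin k₁) (Fin k₁) ℝ) (R₂₂ : Matrix (Fin k₂) (Fin k₂) ℝ)
        (R₂₁ : Matrix (Fin k₂) (Fin k₁) ℝ),
        R₁₁.IsSymm → R₂₂.IsSymm →
        ∀ (R : Matrix (Fin k₁ ⊕ Fin k₂) (Fin k₁ ⊕ Fin k₂) ℝ),
          R = Matrix.fromBlocks R₁₁ R₂₁ᵀ R₂₁ R₂₂ →
          ‖R‖ ≤ M →
          (-(R₁₁ + δ • (1 : Matrix (Fin k₁) (Fin k₁) ℝ))).PosSemidef →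
          ((R₂₂ - R₂₁ * R₁₁⁻¹ * R₂₁ᵀ) - δ • (1 : Matrix (Fin k₂) (Fin k₂) ℝ)).PosSemidef →
          IsUnit R ∧ ‖R⁻¹‖ ≤ C :=
  stmt_0_general k₁ k₂ δ M hδ
end

section
/- Assume Condition (I): R₁₁ ≺ 0 and S₁ ≻ 0. Set u₂* := ψ₂ and u₁* := φ₁(u₂*). Then for all u₁ ∈ ℝ^{k₁} and u₂ ∈ ℝ^{k₂}: f(u₁, u₂*) ≤ f(u₁*, u₂*) ≤ f(φ₁(u₂), u₂), and f(u₁*, u₂*) = −⟨R⁻¹Δ, Δ⟩. (Finite-dimensional form of the explicit–implicit saddle point property of Theorem 1 of the paper.) -/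
/-!
At the stationary point `v* = (u₁*, u₂*)` block elimination gives `R v* = -Δ`, hence
`f(v* + w) = f(v*) + ⟨R w, w⟩` for symmetric `R`. Completing the square in the first block
(the Schur complement identity) then gives
`f(u₁, u₂) = f(v*) + ⟨R₁₁ (u₁ - φ₁ u₂), u₁ - φ₁ u₂⟩ + ⟨S₁ (u₂ - u₂*), u₂ - u₂*⟩`,
and the two saddle inequalities are the signs of the last two terms under Condition (I).
The value is `f(v*) = ⟨Δ, v*⟩ = -⟨R⁻¹ Δ, Δ⟩`.
-/

open Matrix

section

variable {α ι m n : Type*} [CommRing α] [Fintype ι] [Fintype m] [Fintype n] [DecidableEq m]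

def quadFun (R : Matrix ι ι α) (Δ u : ι → α) : α :=
  R *ᵥ u ⬝ᵥ u + 2 * (Δ ⬝ᵥ u)

theorem quadFun_add_of_mulVec_eq_neg {R : Matrix ι ι α} (hR : Rᵀ = R) {Δ v : ι → α}
    (hv : R *ᵥ v = -Δ) (w : ι → α) :
    quadFun R Δ (v + w) = quadFun R Δ v + R *ᵥ w ⬝ᵥ w := by
  have hwv : R *ᵥ w ⬝ᵥ v = -Δ ⬝ᵥ w := by
    rw [dotProduct_comm, dotProduct_mulVec, ← mulVec_transpose, hR, hv]
  simp only [quadFun, mulVec_add, add_dotProduct, dotProduct_add, hwv, hv, neg_dotProduct]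
  ring

theorem quadFun_eq_neg_inv_of_mulVec_eq_neg [DecidableEq ι] {R : Matrix ι ι α}
    (hR : IsUnit R.det) {Δ v : ι → α} (hv : R *ᵥ v = -Δ) :
    quadFun R Δ v = -(R⁻¹ *ᵥ Δ ⬝ᵥ Δ) := by
  have hinv : R⁻¹ *ᵥ Δ = -v := by
    rw [← neg_neg Δ, ← hv, mulVec_neg, mulVec_mulVec, nonsing_inv_mul _ hR, one_mulVec]
  rw [quadFun, hv, hinv, neg_dotProduct, neg_dotProduct, neg_neg, dotProduct_comm v Δ]
  ring

theorem isUnit_det_fromBlocks [DecidableEq n] {A : Matrix m m α} {B : Matrix m n α}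
    {C : Matrix n m α} {D : Matrix n n α} (hA : IsUnit A.det)
    (hS : IsUnit (D - C * A⁻¹ * B).det) : IsUnit (fromBlocks A B C D).det := by
  have := A.invertibleOfIsUnitDet hA
  rw [det_fromBlocks₁₁, invOf_eq_nonsing_inv]
  exact hA.mul hS

theorem fromBlocks_mulVec_sumElim_eq_neg {A : Matrix m m α} {B : Matrix m n α}
    {C : Matrix n m α} {D : Matrix n n α} (hA : IsUnit A.det) {Δ₁ x : m → α} {Δ₂ y : n → α}
    (hx : x = -(A⁻¹ *ᵥ (B *ᵥ y + Δ₁)))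
    (hy : (D - C * A⁻¹ * B) *ᵥ y = -(Δ₂ - (C * A⁻¹) *ᵥ Δ₁)) :
    fromBlocks A B C D *ᵥ Sum.elim x y = -Sum.elim Δ₁ Δ₂ := by
  have h₁ : A *ᵥ x + B *ᵥ y = -Δ₁ := by
    rw [hx, mulVec_neg, mulVec_mulVec, mul_nonsing_inv _ hA, one_mulVec]
    abel
  have h₂ : C *ᵥ x + D *ᵥ y = -Δ₂ := by
    rw [sub_mulVec, ← mulVec_mulVec, ← mulVec_mulVec, ← mulVec_mulVec] at hy
    simp only [hx, mulVec_neg, mulVec_add]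
    linear_combination hy
  rw [fromBlocks_mulVec, Sum.elim_comp_inl, Sum.elim_comp_inr, h₁, h₂, Sum.elim_neg_neg]

theorem fromBlocks_mulVec_dotProduct_eq_schur₁₁ [StarRing α] [TrivialStar α] {A : Matrix m m α}
    (hA : Aᵀ = A) (hAu : IsUnit A.det) (C : Matrix n m α) (D : Matrix n n α) (x : m → α)
    (y : n → α) :
    fromBlocks A Cᵀ C D *ᵥ Sum.elim x y ⬝ᵥ Sum.elim x y =
      A *ᵥ (x + (A⁻¹ * Cᵀ) *ᵥ y) ⬝ᵥ (x + (A⁻¹ * Cᵀ) *ᵥ y) + (D - C * A⁻¹ * Cᵀ) *ᵥ y ⬝ᵥ y := by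
  have := A.invertibleOfIsUnitDet hAu
  have h := schur_complement_eq₁₁ Cᵀ D x y
    (by rwa [IsHermitian, conjTranspose_eq_transpose_of_trivial] : A.IsHermitian)
  simp only [conjTranspose_eq_transpose_of_trivial, transpose_transpose, star_trivial,
    ← dotProduct_mulVec] at h
  rw [dotProduct_comm, h, dotProduct_comm, dotProduct_comm y]

theorem quadFun_fromBlocks_sumElim [StarRing α] [TrivialStar α]
    {A : Matrix m m α} {C : Matrix n m α} {D : Matrix n n α} (hA : Aᵀ = A) (hD : Dᵀ = D)
    (hAu : IsUnit A.det) {Δ : m ⊕ n → α} {x₀ : m → α} {y₀ : n → α}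
    (h₀ : fromBlocks A Cᵀ C D *ᵥ Sum.elim x₀ y₀ = -Δ) (x : m → α) (y : n → α) :
    quadFun (fromBlocks A Cᵀ C D) Δ (Sum.elim x y) =
      quadFun (fromBlocks A Cᵀ C D) Δ (Sum.elim x₀ y₀) +
        A *ᵥ (x - x₀ + (A⁻¹ * Cᵀ) *ᵥ (y - y₀)) ⬝ᵥ (x - x₀ + (A⁻¹ * Cᵀ) *ᵥ (y - y₀)) +
        (D - C * A⁻¹ * Cᵀ) *ᵥ (y - y₀) ⬝ᵥ (y - y₀) := by
  have hsymm : (fromBlocks A Cᵀ C D)ᵀ = fromBlocks A Cᵀ C D := by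
    rw [fromBlocks_transpose, transpose_transpose, hA, hD]
  have hsplit : Sum.elim x y = Sum.elim x₀ y₀ + Sum.elim (x - x₀) (y - y₀) := by
    rw [← Sum.elim_add_add, add_sub_cancel, add_sub_cancel]
  rw [hsplit, quadFun_add_of_mulVec_eq_neg hsymm h₀,
    fromBlocks_mulVec_dotProduct_eq_schur₁₁ hA hAu, add_assoc]

theorem Matrix.PosSemidef.mulVec_dotProduct_self_nonneg [PartialOrder α] [StarRing α]
    [TrivialStar α] {M : Matrix ι ι α} (hM : M.PosSemidef) (x : ι → α) : 0 ≤ M *ᵥ x ⬝ᵥ x := by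
  simpa only [star_trivial, dotProduct_comm x] using hM.dotProduct_mulVec_nonneg x

end

theorem stmt_7_general (k₁ k₂ : ℕ)
    (R₁₁ : Matrix (Fin k₁) (Fin k₁) ℝ) (R₂₂ : Matrix (Fin k₂) (Fin k₂) ℝ)
    (R₂₁ : Matrix (Fin k₂) (Fin k₁) ℝ)
    (hR₁₁ : R₁₁.IsSymm) (hR₂₂ : R₂₂.IsSymm)
    (R : Matrix (Fin k₁ ⊕ Fin k₂) (Fin k₁ ⊕ Fin k₂) ℝ)
    (hR : R = Matrix.fromBlocks R₁₁ R₂₁ᵀ R₂₁ R₂₂)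
    (S₁ : Matrix (Fin k₂) (Fin k₂) ℝ) (hS₁ : S₁ = R₂₂ - R₂₁ * R₁₁⁻¹ * R₂₁ᵀ)
    (hCondI₁ : (-R₁₁).PosDef) (hCondI₂ : S₁.PosDef)
    (Δ₁ : Fin k₁ → ℝ) (Δ₂ : Fin k₂ → ℝ) (Δ : Fin k₁ ⊕ Fin k₂ → ℝ)
    (hΔ : Δ = Sum.elim Δ₁ Δ₂)
    (f : (Fin k₁ → ℝ) → (Fin k₂ → ℝ) → ℝ)
    (hf : ∀ u₁ u₂, f u₁ u₂ =
      R.mulVec (Sum.elim u₁ u₂) ⬝ᵥ Sum.elim u₁ u₂ + 2 * (Δ ⬝ᵥ Sum.elim u₁ u₂))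
    (φ₁ : (Fin k₂ → ℝ) → (Fin k₁ → ℝ))
    (hφ₁ : ∀ u₂, φ₁ u₂ = -(R₁₁⁻¹.mulVec (R₂₁ᵀ.mulVec u₂ + Δ₁)))
    (ψ₂ : Fin k₂ → ℝ)
    (hψ₂ : ψ₂ = -(S₁⁻¹.mulVec (Δ₂ - (R₂₁ * R₁₁⁻¹).mulVec Δ₁)))
    (u₁star : Fin k₁ → ℝ) (u₂star : Fin k₂ → ℝ)
    (hu₂star : u₂star = ψ₂) (hu₁star : u₁star = φ₁ u₂star) :
    (∀ (u₁ : Fin k₁ → ℝ) (u₂ : Fin k₂ → ℝ),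
      f u₁ u₂star ≤ f u₁star u₂star ∧ f u₁star u₂star ≤ f (φ₁ u₂) u₂)
    ∧ f u₁star u₂star = -(R⁻¹.mulVec Δ ⬝ᵥ Δ) := by
  have hA : IsUnit R₁₁.det := (isUnit_iff_isUnit_det R₁₁).mp (by simpa using hCondI₁.isUnit.neg)
  have hS : IsUnit S₁.det := (isUnit_iff_isUnit_det S₁).mp hCondI₂.isUnit
  have hcrit : R *ᵥ Sum.elim u₁star u₂star = -Δ := by
    rw [hR, hΔ]
    refine fromBlocks_mulVec_sumElim_eq_neg hA (by rw [hu₁star, hφ₁]) ?_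
    rw [← hS₁, hu₂star, hψ₂, mulVec_neg, mulVec_mulVec, mul_nonsing_inv _ hS, one_mulVec]
  have hsaddle : ∀ u₁ u₂, f u₁ u₂ = f u₁star u₂star + R₁₁ *ᵥ (u₁ - φ₁ u₂) ⬝ᵥ (u₁ - φ₁ u₂) +
      S₁ *ᵥ (u₂ - u₂star) ⬝ᵥ (u₂ - u₂star) := by
    intro u₁ u₂
    have hφ : u₁ - u₁star + (R₁₁⁻¹ * R₂₁ᵀ) *ᵥ (u₂ - u₂star) = u₁ - φ₁ u₂ := by
      simp only [hu₁star, hφ₁, ← mulVec_mulVec, mulVec_add, mulVec_sub]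
      abel
    rw [hf, hf, ← hφ, hS₁]
    rw [hR] at hcrit ⊢
    exact quadFun_fromBlocks_sumElim hR₁₁.eq hR₂₂.eq hA hcrit u₁ u₂
  refine ⟨fun u₁ u₂ => ⟨?_, ?_⟩, ?_⟩
  · have hneg := hCondI₁.posSemidef.mulVec_dotProduct_self_nonneg (u₁ - u₁star)
    rw [neg_mulVec, neg_dotProduct] at hneg
    rw [hsaddle u₁ u₂star, ← hu₁star, sub_self, mulVec_zero, zero_dotProduct]
    linarith
  · rw [hsaddle (φ₁ u₂) u₂, sub_self, mulVec_zero, zero_dotProduct]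
    linarith [hCondI₂.posSemidef.mulVec_dotProduct_self_nonneg (u₂ - u₂star)]
  · rw [hf]
    refine quadFun_eq_neg_inv_of_mulVec_eq_neg ?_ hcrit
    rw [hR]
    exact isUnit_det_fromBlocks hA (hS₁ ▸ hS)

/-- Finite-dimensional form of the explicit–implicit saddle point property (Theorem 1 of the
paper): under Condition (I) (`R₁₁ ≺ 0`, `S₁ ≻ 0`), with `u₂* = ψ₂` and `u₁* = φ₁(u₂*)`,
`f(u₁, u₂*) ≤ f(u₁*, u₂*) ≤ f(φ₁(u₂), u₂)` for all `u₁, u₂`, and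
`f(u₁*, u₂*) = −⟨R⁻¹Δ, Δ⟩`. -/
theorem stmt_7 (k₁ k₂ : ℕ) (hk₁ : 0 < k₁) (hk₂ : 0 < k₂)
    (R₁₁ : Matrix (Fin k₁) (Fin k₁) ℝ) (R₂₂ : Matrix (Fin k₂) (Fin k₂) ℝ)
    (R₂₁ : Matrix (Fin k₂) (Fin k₁) ℝ)
    (hR₁₁ : R₁₁.IsSymm) (hR₂₂ : R₂₂.IsSymm)
    (R : Matrix (Fin k₁ ⊕ Fin k₂) (Fin k₁ ⊕ Fin k₂) ℝ)
    (hR : R = Matrix.fromBlocks R₁₁ R₂₁ᵀ R₂₁ R₂₂)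
    (S₁ : Matrix (Fin k₂) (Fin k₂) ℝ) (hS₁ : S₁ = R₂₂ - R₂₁ * R₁₁⁻¹ * R₂₁ᵀ)
    (hCondI₁ : (-R₁₁).PosDef) (hCondI₂ : S₁.PosDef)
    (Δ₁ : Fin k₁ → ℝ) (Δ₂ : Fin k₂ → ℝ) (Δ : Fin k₁ ⊕ Fin k₂ → ℝ)
    (hΔ : Δ = Sum.elim Δ₁ Δ₂)
    (f : (Fin k₁ → ℝ) → (Fin k₂ → ℝ) → ℝ)
    (hf : ∀ u₁ u₂, f u₁ u₂ =
      R.mulVec (Sum.elim u₁ u₂) ⬝ᵥ Sum.elim u₁ u₂ + 2 * (Δ ⬝ᵥ Sum.elim u₁ u₂))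
    (φ₁ : (Fin k₂ → ℝ) → (Fin k₁ → ℝ))
    (hφ₁ : ∀ u₂, φ₁ u₂ = -(R₁₁⁻¹.mulVec (R₂₁ᵀ.mulVec u₂ + Δ₁)))
    (ψ₂ : Fin k₂ → ℝ)
    (hψ₂ : ψ₂ = -(S₁⁻¹.mulVec (Δ₂ - (R₂₁ * R₁₁⁻¹).mulVec Δ₁)))
    (u₁star : Fin k₁ → ℝ) (u₂star : Fin k₂ → ℝ)
    (hu₂star : u₂star = ψ₂) (hu₁star : u₁star = φ₁ u₂star) :
    (∀ (u₁ : Fin k₁ → ℝ) (u₂ : Fin k₂ → ℝ),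
      f u₁ u₂star ≤ f u₁star u₂star ∧ f u₁star u₂star ≤ f (φ₁ u₂) u₂)
    ∧ f u₁star u₂star = -(R⁻¹.mulVec Δ ⬝ᵥ Δ) :=
  stmt_7_general k₁ k₂ R₁₁ R₂₂ R₂₁ hR₁₁ hR₂₂ R hR S₁ hS₁ hCondI₁ hCondI₂ Δ₁ Δ₂ Δ hΔ f hf φ₁ hφ₁ ψ₂
    hψ₂ u₁star u₂star hu₂star hu₁star
end

section
/- Assume R₁₁ ≺ 0 and R₂₂ ≻ 0 (so R is invertible). Then the quadratic game has a value: inf over u₂ ∈ ℝ^{k₂} of (sup over u₁ ∈ ℝ^{k₁} of f(u₁,u₂)) equals sup over u₁ ∈ ℝ^{k₁} of (inf over u₂ ∈ ℝ^{k₂} of f(u₁,u₂)), and both equal f(−R⁻¹Δ) = −⟨R⁻¹Δ, Δ⟩. -/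
/-!
Completing the square at `u* = -R⁻¹Δ` gives `f u = ⟨R (u - u*), u - u*⟩ - ⟨R⁻¹Δ, Δ⟩`. Moving only
`u₁` away from `u*` changes `f` by `⟨R₁₁ w, w⟩ ≤ 0`, moving only `u₂` by `⟨R₂₂ w, w⟩ ≥ 0`, so `u*`
is a saddle point and both iterated values equal `f u*`. Completing the square in each block
separately shows that `f` is bounded above in `u₁` and below in `u₂`, so the real `⨆` and `⨅`
are not junk values. `R` is invertible because its Schur complement `R₁₁ - R₂₁ᵀ R₂₂⁻¹ R₂₁` is
negative definite.
-/

open Matrix Set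

namespace Matrix

variable {m n R : Type*} [Fintype m] [Fintype n]

lemma IsSymm.mulVec_dotProduct_comm [CommSemiring R] {A : Matrix n n R} (hA : A.IsSymm)
    (x y : n → R) : A *ᵥ x ⬝ᵥ y = A *ᵥ y ⬝ᵥ x := by
  rw [dotProduct_comm, dotProduct_mulVec, ← mulVec_transpose, hA.eq]

lemma transpose_mulVec_dotProduct [CommSemiring R] (B : Matrix m n R) (x : n → R) (y : m → R) :
    Bᵀ *ᵥ y ⬝ᵥ x = B *ᵥ x ⬝ᵥ y := by
  rw [mulVec_transpose, ← dotProduct_mulVec, dotProduct_comm]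

lemma IsSymm.mulVec_dotProduct_add_two_dotProduct [CommRing R] [DecidableEq n]
    {A : Matrix n n R} (hA : A.IsSymm) (hA' : IsUnit A.det) (b x : n → R) :
    A *ᵥ x ⬝ᵥ x + 2 * (b ⬝ᵥ x) =
      A *ᵥ (x + A⁻¹ *ᵥ b) ⬝ᵥ (x + A⁻¹ *ᵥ b) - A⁻¹ *ᵥ b ⬝ᵥ b := by
  have hb : A *ᵥ (A⁻¹ *ᵥ b) = b := by rw [mulVec_mulVec, mul_nonsing_inv _ hA', one_mulVec]
  rw [mulVec_add, hb, add_dotProduct, dotProduct_add, dotProduct_add,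
    hA.mulVec_dotProduct_comm x (A⁻¹ *ᵥ b), hb, dotProduct_comm b (A⁻¹ *ᵥ b)]
  ring

lemma PosSemidef.mulVec_dotProduct_self_nonneg_s10 {A : Matrix n n ℝ} (hA : A.PosSemidef)
    (x : n → ℝ) : 0 ≤ A *ᵥ x ⬝ᵥ x := by
  simpa [dotProduct_comm] using hA.dotProduct_mulVec_nonneg x

lemma PosDef.neg_inv_mulVec_dotProduct_le [DecidableEq n] {A : Matrix n n ℝ} (hA : A.PosDef)
    (b x : n → ℝ) : -(A⁻¹ *ᵥ b ⬝ᵥ b) ≤ A *ᵥ x ⬝ᵥ x + 2 * (b ⬝ᵥ x) := by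
  rw [(isHermitian_iff_isSymm.1 hA.1).mulVec_dotProduct_add_two_dotProduct
    ((isUnit_iff_isUnit_det A).1 hA.isUnit)]
  linarith [hA.posSemidef.mulVec_dotProduct_self_nonneg_s10 (x + A⁻¹ *ᵥ b)]

lemma isUnit_fromBlocks_transpose_of_posDef [DecidableEq m] [DecidableEq n] {A : Matrix m m ℝ}
    {D : Matrix n n ℝ} (hA : (-A).PosDef) (B : Matrix n m ℝ) (hD : D.PosDef) :
    IsUnit (fromBlocks A Bᵀ B D) := by
  let := hD.isUnit.invertible
  have hschur : (-A + Bᵀ * D⁻¹ * B).PosDef := by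
    simpa [conjTranspose_eq_transpose_of_trivial] using
      hA.add_posSemidef (hD.inv.posSemidef.conjTranspose_mul_mul_same B)
  rw [isUnit_fromBlocks_iff_of_invertible₂₂, invOf_eq_nonsing_inv]
  simpa [neg_add_eq_sub] using hschur.isUnit.neg

def blockQuadForm [CommSemiring R] (A : Matrix m m R) (B : Matrix n m R) (D : Matrix n n R)
    (x : m → R) (y : n → R) : R :=
  A *ᵥ x ⬝ᵥ x + 2 * (B *ᵥ x ⬝ᵥ y) + D *ᵥ y ⬝ᵥ y

lemma fromBlocks_mulVec_sumElim_dotProduct [CommSemiring R] (A : Matrix m m R)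
    (B : Matrix n m R) (D : Matrix n n R) (x : m → R) (y : n → R) :
    fromBlocks A Bᵀ B D *ᵥ Sum.elim x y ⬝ᵥ Sum.elim x y = blockQuadForm A B D x y := by
  rw [fromBlocks_mulVec, Sum.elim_comp_inl, Sum.elim_comp_inr, sumElim_dotProduct_sumElim,
    add_dotProduct, add_dotProduct, transpose_mulVec_dotProduct, blockQuadForm]
  ring

section BlockQuadForm

variable {A : Matrix m m ℝ} (B : Matrix n m ℝ) {D : Matrix n n ℝ}

lemma blockQuadForm_zero_right_nonpos (hA : (-A).PosSemidef) (D : Matrix n n ℝ) (x : m → ℝ) :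
    blockQuadForm A B D x 0 ≤ 0 := by
  have := hA.mulVec_dotProduct_self_nonneg_s10 x
  simp only [neg_mulVec, neg_dotProduct] at this
  simpa [blockQuadForm] using this

lemma blockQuadForm_zero_left_nonneg (A : Matrix m m ℝ) (hD : D.PosSemidef) (y : n → ℝ) :
    0 ≤ blockQuadForm A B D 0 y := by
  simpa [blockQuadForm] using hD.mulVec_dotProduct_self_nonneg_s10 y

lemma exists_forall_blockQuadForm_le [DecidableEq m] (hA : (-A).PosDef) (D : Matrix n n ℝ)
    (y : n → ℝ) : ∃ M, ∀ x, blockQuadForm A B D x y ≤ M := by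
  refine ⟨(-A)⁻¹ *ᵥ (Bᵀ *ᵥ y) ⬝ᵥ (Bᵀ *ᵥ y) + D *ᵥ y ⬝ᵥ y, fun x => ?_⟩
  have := hA.neg_inv_mulVec_dotProduct_le (-(Bᵀ *ᵥ y)) x
  simp only [mulVec_neg, neg_mulVec, neg_dotProduct, dotProduct_neg, neg_neg,
    transpose_mulVec_dotProduct] at this
  rw [blockQuadForm]
  linarith

lemma exists_forall_le_blockQuadForm [DecidableEq n] (A : Matrix m m ℝ) (hD : D.PosDef)
    (x : m → ℝ) : ∃ M, ∀ y, M ≤ blockQuadForm A B D x y := by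
  refine ⟨-(D⁻¹ *ᵥ (B *ᵥ x) ⬝ᵥ (B *ᵥ x)) + A *ᵥ x ⬝ᵥ x, fun y => ?_⟩
  have := hD.neg_inv_mulVec_dotProduct_le (B *ᵥ x) y
  rw [blockQuadForm]
  linarith

end BlockQuadForm

end Matrix

section SaddlePoint

variable {E F β : Type*} [ConditionallyCompleteLattice β] {g : E → F → β} {a : E} {b : F}

theorem IsSaddlePointOn.ciInf_ciSup_eq (h : IsSaddlePointOn univ univ g a b)
    (hbdd : ∀ x, BddAbove (range (g x))) : ⨅ x, ⨆ y, g x y = g a b := by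
  have hle : ∀ x, g a b ≤ ⨆ y, g x y := fun x =>
    (h x trivial b trivial).trans (le_ciSup (hbdd x) b)
  have : Nonempty F := ⟨b⟩
  have : Nonempty E := ⟨a⟩
  exact le_antisymm ((ciInf_le ⟨g a b, forall_mem_range.2 hle⟩ a).trans
    (ciSup_le fun y => h a trivial y trivial)) (le_ciInf hle)

theorem IsSaddlePointOn.ciSup_ciInf_eq (h : IsSaddlePointOn univ univ g a b)
    (hbdd : ∀ y, BddBelow (range (g · y))) : ⨆ y, ⨅ x, g x y = g a b := by
  have hle : ∀ y, ⨅ x, g x y ≤ g a b := fun y =>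
    (ciInf_le (hbdd y) a).trans (h a trivial y trivial)
  have : Nonempty F := ⟨b⟩
  have : Nonempty E := ⟨a⟩
  exact le_antisymm (ciSup_le hle) ((le_ciInf fun x => h x trivial b trivial).trans
    (le_ciSup ⟨g a b, forall_mem_range.2 hle⟩ b))

end SaddlePoint

theorem stmt_10_general (k₁ k₂ : ℕ)
    (R₁₁ : Matrix (Fin k₁) (Fin k₁) ℝ) (R₂₂ : Matrix (Fin k₂) (Fin k₂) ℝ)
    (R₂₁ : Matrix (Fin k₂) (Fin k₁) ℝ)
    (hR₁₁ : R₁₁.IsSymm) (hR₂₂ : R₂₂.IsSymm)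
    (hneg : (-R₁₁).PosDef) (hpos : R₂₂.PosDef)
    (R : Matrix (Fin k₁ ⊕ Fin k₂) (Fin k₁ ⊕ Fin k₂) ℝ)
    (hR : R = Matrix.fromBlocks R₁₁ R₂₁ᵀ R₂₁ R₂₂)
    (Δ : Fin k₁ ⊕ Fin k₂ → ℝ)
    (f : (Fin k₁ → ℝ) → (Fin k₂ → ℝ) → ℝ)
    (hf : ∀ u₁ u₂, f u₁ u₂ =
      R.mulVec (Sum.elim u₁ u₂) ⬝ᵥ Sum.elim u₁ u₂ + 2 * (Δ ⬝ᵥ Sum.elim u₁ u₂)) :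
    (⨅ u₂ : Fin k₂ → ℝ, ⨆ u₁ : Fin k₁ → ℝ, f u₁ u₂)
        = (⨆ u₁ : Fin k₁ → ℝ, ⨅ u₂ : Fin k₂ → ℝ, f u₁ u₂)
    ∧ (⨅ u₂ : Fin k₂ → ℝ, ⨆ u₁ : Fin k₁ → ℝ, f u₁ u₂)
        = f ((-(R⁻¹.mulVec Δ)) ∘ Sum.inl) ((-(R⁻¹.mulVec Δ)) ∘ Sum.inr)
    ∧ f ((-(R⁻¹.mulVec Δ)) ∘ Sum.inl) ((-(R⁻¹.mulVec Δ)) ∘ Sum.inr)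
        = -(R⁻¹.mulVec Δ ⬝ᵥ Δ) := by
  have hRunit : IsUnit R.det :=
    (isUnit_iff_isUnit_det R).1 (hR ▸ isUnit_fromBlocks_transpose_of_posDef hneg R₂₁ hpos)
  have hRsymm : R.IsSymm := hR ▸ IsSymm.fromBlocks hR₁₁ (transpose_transpose R₂₁) hR₂₂
  set p := -(R⁻¹ *ᵥ Δ) with hp
  have hshift : ∀ u₁ u₂, f u₁ u₂ = blockQuadForm R₁₁ R₂₁ R₂₂ (u₁ - p ∘ Sum.inl)
      (u₂ - p ∘ Sum.inr) + -(R⁻¹ *ᵥ Δ ⬝ᵥ Δ) := by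
    intro u₁ u₂
    have hsum : Sum.elim u₁ u₂ + R⁻¹ *ᵥ Δ = Sum.elim (u₁ - p ∘ Sum.inl) (u₂ - p ∘ Sum.inr) := by
      ext (i | i) <;> simp [hp, sub_eq_add_neg]
    rw [hf, hRsymm.mulVec_dotProduct_add_two_dotProduct hRunit, hsum, hR,
      fromBlocks_mulVec_sumElim_dotProduct, sub_eq_add_neg]
  -- `IsSaddlePointOn` minimises in the first argument, which here is the player `u₂`.
  have hsaddle : IsSaddlePointOn univ univ (flip f) (p ∘ Sum.inr) (p ∘ Sum.inl) := by
    intro u₂ _ u₁ _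
    simp only [flip, hshift, sub_self]
    linarith [blockQuadForm_zero_right_nonpos R₂₁ hneg.posSemidef R₂₂ (u₁ - p ∘ Sum.inl),
      blockQuadForm_zero_left_nonneg R₂₁ R₁₁ hpos.posSemidef (u₂ - p ∘ Sum.inr)]
  have hbddAbove : ∀ u₂, BddAbove (range (flip f u₂)) := by
    intro u₂
    obtain ⟨M, hM⟩ := exists_forall_blockQuadForm_le R₂₁ hneg R₂₂ (u₂ - p ∘ Sum.inr)
    exact ⟨_, forall_mem_range.2 fun u₁ => (hshift u₁ u₂).trans_le (add_le_add_left (hM _) _)⟩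
  have hbddBelow : ∀ u₁, BddBelow (range (flip f · u₁)) := by
    intro u₁
    obtain ⟨M, hM⟩ := exists_forall_le_blockQuadForm R₂₁ R₁₁ hpos (u₁ - p ∘ Sum.inl)
    exact ⟨_, forall_mem_range.2 fun u₂ => (add_le_add_left (hM _) _).trans (hshift u₁ u₂).ge⟩
  have hval := hsaddle.ciInf_ciSup_eq hbddAbove
  refine ⟨hval.trans (hsaddle.ciSup_ciInf_eq hbddBelow).symm, hval, ?_⟩
  simp [hshift, blockQuadForm]

/-- If `R₁₁ ≺ 0` and `R₂₂ ≻ 0` then the quadratic game has a value: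
`inf_{u₂} sup_{u₁} f(u₁,u₂) = sup_{u₁} inf_{u₂} f(u₁,u₂) = f(−R⁻¹Δ) = −⟨R⁻¹Δ, Δ⟩`. -/
theorem stmt_10 (k₁ k₂ : ℕ) (hk₁ : 0 < k₁) (hk₂ : 0 < k₂)
    (R₁₁ : Matrix (Fin k₁) (Fin k₁) ℝ) (R₂₂ : Matrix (Fin k₂) (Fin k₂) ℝ)
    (R₂₁ : Matrix (Fin k₂) (Fin k₁) ℝ)
    (hR₁₁ : R₁₁.IsSymm) (hR₂₂ : R₂₂.IsSymm)
    (hneg : (-R₁₁).PosDef) (hpos : R₂₂.PosDef)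
    (R : Matrix (Fin k₁ ⊕ Fin k₂) (Fin k₁ ⊕ Fin k₂) ℝ)
    (hR : R = Matrix.fromBlocks R₁₁ R₂₁ᵀ R₂₁ R₂₂)
    (Δ : Fin k₁ ⊕ Fin k₂ → ℝ)
    (f : (Fin k₁ → ℝ) → (Fin k₂ → ℝ) → ℝ)
    (hf : ∀ u₁ u₂, f u₁ u₂ =
      R.mulVec (Sum.elim u₁ u₂) ⬝ᵥ Sum.elim u₁ u₂ + 2 * (Δ ⬝ᵥ Sum.elim u₁ u₂)) :
    (⨅ u₂ : Fin k₂ → ℝ, ⨆ u₁ : Fin k₁ → ℝ, f u₁ u₂)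
        = (⨆ u₁ : Fin k₁ → ℝ, ⨅ u₂ : Fin k₂ → ℝ, f u₁ u₂)
    ∧ (⨅ u₂ : Fin k₂ → ℝ, ⨆ u₁ : Fin k₁ → ℝ, f u₁ u₂)
        = f ((-(R⁻¹.mulVec Δ)) ∘ Sum.inl) ((-(R⁻¹.mulVec Δ)) ∘ Sum.inr)
    ∧ f ((-(R⁻¹.mulVec Δ)) ∘ Sum.inl) ((-(R⁻¹.mulVec Δ)) ∘ Sum.inr)
        = -(R⁻¹.mulVec Δ ⬝ᵥ Δ) :=
  stmt_10_general k₁ k₂ R₁₁ R₂₂ R₂₁ hR₁₁ hR₂₂ hneg hpos R hR Δ f hf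
end
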